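/- In a directed graph on the vertex set of literals {x_1,...,x_n, ¬x_1,...,¬x_n}, if there exists a directed cycle containing both x_i and ¬x_i for some i (a 'bicycle'), then there exists a directed path ℓ → ℓ_1 → ... → ℓ_t → ℓ' (a 'pretzel') where each ℓ_j is a literal on variable z_j, the variables z_1,...,z_t are pairwise distinct, and ℓ, ℓ' are literals on variables belonging to {z_1,...,z_t}. -/

import Mathlib

/-!
Unroll the cycle into a periodic walk. Windows of consecutive positions on which the walk visits
pairwise distinct variables are no longer than the period, so there is a longest one. Extending a
longest window by one step on either side repeats one of its variables: the window is the inner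
segment of a pretzel, and its two neighbours on the walk are the ends.
-/

open Set

variable {α β : Type*}

def IsPretzel (G : α → α → Prop) (v : α → β) (t : ℕ) (z : ℕ → α) (a b : α) : Prop :=
  1 ≤ t ∧ (∀ i j, i < t → j < t → v (z i) = v (z j) → i = j) ∧
    G a (z 0) ∧ (∀ j, j + 1 < t → G (z j) (z (j + 1))) ∧ G (z (t - 1)) b ∧
    (∃ i < t, v (z i) = v a) ∧ (∃ i < t, v (z i) = v b)

theorem Set.InjOn.mem_image_of_not_injOn_insert {f : α → β} {s : Set α} {a : α}
    (hs : InjOn f s) (ha : ¬ InjOn f (insert a s)) : f a ∈ f '' s := by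
  by_cases has : a ∈ s
  · exact mem_image_of_mem f has
  · by_contra hfa
    exact ha ((injOn_insert has).2 ⟨hs, hfa⟩)

namespace Function.Periodic

variable {f : ℕ → β} {m : ℕ}

theorem injOn_Ico_add_period (hf : Periodic f m) {p L : ℕ} (h : InjOn f (Ico p (p + L))) :
    InjOn f (Ico (p + m) (p + m + L)) := by
  intro x hx y hy hxy
  simp only [mem_Ico] at hx hy
  have hshift : f (x - m) = f (y - m) := by
    rwa [← hf (x - m), ← hf (y - m), Nat.sub_add_cancel (by omega), Nat.sub_add_cancel (by omega)]
  have := h (x₁ := x - m) ⟨by omega, by omega⟩ (x₂ := y - m) ⟨by omega, by omega⟩ hshift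
  omega

theorem not_injOn_Ico_of_period_lt (hf : Periodic f m) (hm : 0 < m) (p : ℕ) {L : ℕ} (hL : m < L) :
    ¬ InjOn f (Ico p (p + L)) := fun h ↦ by
  have := h (x₁ := p + m) ⟨by omega, by omega⟩ (x₂ := p) ⟨le_rfl, by omega⟩ (hf p)
  omega

theorem exists_longest_injOn_Ico (hf : Periodic f m) (hm : 0 < m) :
    ∃ p w, 0 < p ∧ 0 < w ∧ InjOn f (Ico p (p + w)) ∧ ∀ q, ¬ InjOn f (Ico q (q + (w + 1))) := by
  classical
  let HasWindow (L : ℕ) : Prop := ∃ p, InjOn f (Ico p (p + L))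
  have hone : HasWindow 1 := ⟨0, fun x hx y hy _ ↦ by simp only [mem_Ico] at hx hy; omega⟩
  set w := Nat.findGreatest HasWindow m
  have hw : 0 < w := Nat.le_findGreatest hm hone
  obtain ⟨p, hp⟩ : HasWindow w := Nat.findGreatest_spec hm hone
  refine ⟨p + m, w, by omega, hw, hf.injOn_Ico_add_period hp, fun q hq ↦ ?_⟩
  rcases Nat.lt_or_ge w m with hwm | hwm
  · exact Nat.findGreatest_is_greatest (Nat.lt_succ_self w) hwm ⟨q, hq⟩
  · exact hf.not_injOn_Ico_of_period_lt hm q (by omega) hq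

theorem exists_injOn_Ico_neighbours_mem_image (hf : Periodic f m) (hm : 0 < m) :
    ∃ p w, 0 < p ∧ 0 < w ∧ InjOn f (Ico p (p + w)) ∧
      f (p - 1) ∈ f '' Ico p (p + w) ∧ f (p + w) ∈ f '' Ico p (p + w) := by
  obtain ⟨p, w, hp, hw, hinj, hlongest⟩ := hf.exists_longest_injOn_Ico hm
  refine ⟨p, w, hp, hw, hinj, hinj.mem_image_of_not_injOn_insert ?_,
    hinj.mem_image_of_not_injOn_insert ?_⟩
  · have := hlongest (p - 1)
    rwa [show p - 1 + (w + 1) = p + w by omega, ← insert_Ico_add_one_left_eq_Ico (by omega),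
      show p - 1 + 1 = p by omega] at this
  · rw [insert_Ico_right_eq_Ico_add_one (by omega)]
    exact hlongest p

end Function.Periodic

theorem exists_isPretzel_of_periodic_walk {G : α → α → Prop} (v : α → β) {d : ℕ → α} {m : ℕ}
    (hwalk : ∀ x, G (d x) (d (x + 1))) (hper : Function.Periodic d m) (hm : 0 < m) :
    ∃ t z a b, IsPretzel G v t z a b := by
  obtain ⟨p, w, hp, hw, hinj, ⟨k, hk, hka⟩, ⟨l, hl, hlb⟩⟩ :=
    (hper.comp v).exists_injOn_Ico_neighbours_mem_image hm
  simp only [mem_Ico] at hk hl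
  refine ⟨w, fun j ↦ d (p + j), d (p - 1), d (p + w), hw, fun i j hi hj hij ↦ ?_, ?_,
    fun j _ ↦ hwalk (p + j), ?_, ⟨k - p, by omega, ?_⟩, ⟨l - p, by omega, ?_⟩⟩
  · have := hinj (x₁ := p + i) ⟨by omega, by omega⟩ (x₂ := p + j) ⟨by omega, by omega⟩ hij
    omega
  · simpa [Nat.sub_add_cancel hp] using hwalk (p - 1)
  · simpa [show p + (w - 1) + 1 = p + w by omega] using hwalk (p + (w - 1))
  · simpa [Nat.add_sub_cancel' hk.1] using hka
  · simpa [Nat.add_sub_cancel' hl.1] using hlb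

theorem stmt_12 (n : ℕ) (G : (Fin n × Bool) → (Fin n × Bool) → Prop)
    (hbicycle : ∃ (m : ℕ) (c : ℕ → Fin n × Bool), 0 < m ∧
      (∀ i j, i < m → j < m → c i = c j → i = j) ∧
      (∀ j, j < m → G (c j) (c ((j + 1) % m))) ∧
      ∃ i : Fin n, (∃ j < m, c j = (i, true)) ∧ (∃ j < m, c j = (i, false))) :
    ∃ (t : ℕ) (z : ℕ → Fin n × Bool) (a b : Fin n × Bool),
      1 ≤ t ∧
      (∀ i j, i < t → j < t → (z i).1 = (z j).1 → i = j) ∧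
      G a (z 0) ∧ (∀ j, j + 1 < t → G (z j) (z (j + 1))) ∧ G (z (t - 1)) b ∧
      (∃ i < t, (z i).1 = a.1) ∧ (∃ i < t, (z i).1 = b.1) := by
  obtain ⟨m, c, hm, -, hcycle, -⟩ := hbicycle
  have hwalk : ∀ x, G (c (x % m)) (c ((x + 1) % m)) := fun x ↦ by
    simpa [Nat.mod_add_mod] using hcycle (x % m) (Nat.mod_lt x hm)
  have hper : Function.Periodic (fun x ↦ c (x % m)) m := fun x ↦ by simp
  exact exists_isPretzel_of_periodic_walk Prod.fst hwalk hper hm
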